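/- (Second-order differential equation for the Sobolev orthogonal polynomials.) For every n ≥ 1 one has s_n + χ·Δ(Δs_n) = Δp_{n+1} + (⟨f_{n+1}, s_n⟩_S/‖p_n‖₂²)·Δp_n + (‖s_n‖_S²/‖p_{n−1}‖₂²)·Δp_{n−1}. -/

import Mathlib

open Filter RealInnerProductSpace

variable {H : Type*} [NormedAddCommGroup H] [InnerProductSpace ℝ H]

/-- `Wlt P n` is the span of `P 0, …, P (n-1)`; thus `Wlt P 0 = ⊥ = W_{-1}` and
`Wlt P (n+1)` is the space `W_n = span{P_0, …, P_n}`. -/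
def Wlt (P : ℕ → H) (n : ℕ) : Submodule ℝ H := Submodule.span ℝ (P '' Set.Iio n)

/-- `Wtot P` is the space `W = ⋃ₙ Wₙ` of all polynomials. -/
def Wtot (P : ℕ → H) : Submodule ℝ H := Submodule.span ℝ (Set.range P)

/-- The Sobolev inner product `⟨f, g⟩_S = ⟨f, g⟩₂ + χ⟨Δf, Δg⟩₂`. -/
noncomputable def innerS (Δ : H →ₗ[ℝ] H) (χ : ℝ) (f g : H) : ℝ :=
  ⟪ f, g ⟫ + χ * ⟪ Δ f, Δ g ⟫

/-- The Sobolev norm `‖f‖_S = √(‖f‖₂² + χ‖Δf‖₂²)`. -/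
noncomputable def normS (Δ : H →ₗ[ℝ] H) (χ : ℝ) (f : H) : ℝ :=
  Real.sqrt (‖f‖ ^ 2 + χ * ‖Δ f‖ ^ 2)

/-!
Put `u = 𝒢sₙ + χΔsₙ`, so that `Δu = sₙ + χΔ²sₙ`. Since `𝒢` raises the degree by one and is
symmetric with `Δ𝒢 = id`, `u` is monic of degree `n + 1` and its Legendre coefficients are
`⟨pⱼ, u⟩₂ = ⟨𝒢pⱼ, sₙ⟩_S`. These vanish for `j < n - 1` because `𝒢pⱼ ∈ W_{n-1}`, and for
`j = n - 1` the Sobolev orthogonality of `sₙ` to `𝒢pₙ₋₁ - sₙ ∈ W_{n-1}` gives `‖sₙ‖_S²`.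
Expanding `u` in the Legendre basis and applying `Δ` yields the equation.
-/

section Filtration

variable {P : ℕ → H}

theorem Wlt_mono {m n : ℕ} (h : m ≤ n) : Wlt P m ≤ Wlt P n :=
  Submodule.span_mono (Set.image_mono fun _ hx => lt_of_lt_of_le hx h)

theorem apply_mem_Wlt {m n : ℕ} (h : m < n) : P m ∈ Wlt P n :=
  Submodule.subset_span ⟨m, h, rfl⟩

theorem Wlt_le_Wtot (n : ℕ) : Wlt P n ≤ Wtot P :=
  Submodule.span_mono (Set.image_subset_range _ _)

theorem Wlt_zero : Wlt P 0 = ⊥ := by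
  simp [Wlt]

theorem mem_Wlt_succ {x : H} {n : ℕ} :
    x ∈ Wlt P (n + 1) ↔ ∃ t : ℝ, ∃ w ∈ Wlt P n, x = t • P n + w := by
  have hIio : Set.Iio (n + 1) = insert n (Set.Iio n) := by
    ext; simp only [Set.mem_Iio, Set.mem_insert_iff]; omega
  rw [Wlt, hIio, Set.image_insert_eq, Submodule.mem_span_insert]
  rfl

theorem apply_notMem_Wlt (hP : LinearIndependent ℝ P) (n : ℕ) : P n ∉ Wlt P n :=
  hP.notMem_span_image (by simp)

theorem map_mem_Wlt_of_mem_Wlt_succ {Δ : H →ₗ[ℝ] H} (hΔ0 : Δ (P 0) = 0)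
    (hΔsucc : ∀ n, Δ (P (n + 1)) = P n) {n : ℕ} {x : H} (hx : x ∈ Wlt P (n + 1)) :
    Δ x ∈ Wlt P n := by
  induction hx using Submodule.span_induction with
  | mem y hy =>
    obtain ⟨j, hj, rfl⟩ := hy
    cases j with
    | zero => simp [hΔ0]
    | succ k => rw [hΔsucc]; exact apply_mem_Wlt (Nat.lt_of_succ_lt_succ hj)
  | zero => simp
  | add y z _ _ hy hz => rw [map_add]; exact add_mem hy hz
  | smul t y _ hy => rw [map_smul]; exact Submodule.smul_mem _ _ hy

end Filtration

def IsMonicOfDegree (P : ℕ → H) (n : ℕ) (x : H) : Prop := x - P n ∈ Wlt P n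

namespace IsMonicOfDegree

variable {P : ℕ → H} {n : ℕ} {x y : H}

theorem mem_Wlt_succ (hx : IsMonicOfDegree P n x) : x ∈ Wlt P (n + 1) := by
  rw [← sub_add_cancel x (P n)]
  exact add_mem (Wlt_mono n.le_succ hx) (apply_mem_Wlt n.lt_succ_self)

theorem sub_mem_Wlt (hx : IsMonicOfDegree P n x) (hy : IsMonicOfDegree P n y) :
    x - y ∈ Wlt P n := by
  rw [← sub_sub_sub_cancel_right x y (P n)]
  exact sub_mem hx hy

theorem add_of_mem_Wlt (hx : IsMonicOfDegree P n x) (hy : y ∈ Wlt P n) :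
    IsMonicOfDegree P n (x + y) := by
  rw [IsMonicOfDegree, add_sub_right_comm]
  exact add_mem hx hy

theorem ne_zero (hP : LinearIndependent ℝ P) (hx : IsMonicOfDegree P n x) : x ≠ 0 := by
  rintro rfl
  exact apply_notMem_Wlt hP n (by simpa using neg_mem hx)

theorem of_map (hP : LinearIndependent ℝ P) {Δ : H →ₗ[ℝ] H} (hΔ0 : Δ (P 0) = 0)
    (hΔsucc : ∀ n, Δ (P (n + 1)) = P n) {g : H} (hg : g ∈ Wlt P (n + 2))
    (hΔg : IsMonicOfDegree P n (Δ g)) : IsMonicOfDegree P (n + 1) g := by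
  obtain ⟨t, w, hw, rfl⟩ := _root_.mem_Wlt_succ.mp hg
  have hΔw : Δ w ∈ Wlt P n := map_mem_Wlt_of_mem_Wlt_succ hΔ0 hΔsucc hw
  have hlead : (t - 1) • P n ∈ Wlt P n := by
    have h : (t - 1) • P n = (Δ (t • P (n + 1) + w) - P n) - Δ w := by
      rw [map_add, map_smul, hΔsucc, sub_smul, one_smul]; abel
    rw [h]
    exact sub_mem hΔg hΔw
  obtain rfl : t = 1 := by
    by_contra ht
    exact apply_notMem_Wlt hP n ((Submodule.smul_mem_iff _ (sub_ne_zero.mpr ht)).mp hlead)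
  simpa [IsMonicOfDegree] using hw

theorem map_of_rightInverse (hP : LinearIndependent ℝ P) {Δ G : H →ₗ[ℝ] H}
    (hΔ0 : Δ (P 0) = 0) (hΔsucc : ∀ n, Δ (P (n + 1)) = P n)
    (hGinv : ∀ u ∈ Wtot P, Δ (G u) = u)
    (hGmap : ∀ n, ∀ u ∈ Wlt P (n + 1), G u ∈ Wlt P (n + 2))
    (hx : IsMonicOfDegree P n x) : IsMonicOfDegree P (n + 1) (G x) := by
  refine of_map hP hΔ0 hΔsucc (hGmap n x hx.mem_Wlt_succ) ?_
  rwa [hGinv x (Wlt_le_Wtot _ hx.mem_Wlt_succ)]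

end IsMonicOfDegree

section Legendre

variable {P p : ℕ → H}

theorem inner_p_p_of_ne (hpmonic : ∀ n, IsMonicOfDegree P n (p n))
    (hportho : ∀ n, ∀ w ∈ Wlt P n, ⟪p n, w⟫ = 0) {i j : ℕ} (h : i ≠ j) : ⟪p i, p j⟫ = 0 := by
  rcases h.lt_or_gt with hij | hji
  · rw [real_inner_comm]
    exact hportho j (p i) (Wlt_mono hij (hpmonic i).mem_Wlt_succ)
  · exact hportho i (p j) (Wlt_mono hji (hpmonic j).mem_Wlt_succ)

theorem inner_p_eq_norm_sq_of_isMonicOfDegree (hpmonic : ∀ n, IsMonicOfDegree P n (p n))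
    (hportho : ∀ n, ∀ w ∈ Wlt P n, ⟪p n, w⟫ = 0) {n : ℕ} {x : H}
    (hx : IsMonicOfDegree P n x) : ⟪p n, x⟫ = ‖p n‖ ^ 2 := by
  rw [← real_inner_self_eq_norm_sq, ← sub_eq_zero, ← inner_sub_right]
  exact hportho n _ (hx.sub_mem_Wlt (hpmonic n))

theorem norm_p_sq_ne_zero (hP : LinearIndependent ℝ P) (hpmonic : ∀ n, IsMonicOfDegree P n (p n))
    (n : ℕ) : ‖p n‖ ^ 2 ≠ 0 :=
  pow_ne_zero 2 (norm_ne_zero_iff.mpr ((hpmonic n).ne_zero hP))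

theorem eq_zero_of_forall_inner_p_eq_zero (hP : LinearIndependent ℝ P)
    (hpmonic : ∀ n, IsMonicOfDegree P n (p n)) (hportho : ∀ n, ∀ w ∈ Wlt P n, ⟪p n, w⟫ = 0)
    {n : ℕ} {v : H} (hv : v ∈ Wlt P n) (horth : ∀ j < n, ⟪p j, v⟫ = 0) : v = 0 := by
  induction n generalizing v with
  | zero => simpa [Wlt_zero] using hv
  | succ n ih =>
    obtain ⟨t, w, hw, rfl⟩ := mem_Wlt_succ.mp hv
    have hlower : t • P n + w - t • p n ∈ Wlt P n := by
      rw [show t • P n + w - t • p n = w - t • (p n - P n) by rw [smul_sub]; abel]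
      exact sub_mem hw (Submodule.smul_mem _ _ (hpmonic n))
    have ht : t * ‖p n‖ ^ 2 = 0 := by
      have h := hportho n _ hlower
      rw [inner_sub_right, horth n n.lt_succ_self, real_inner_smul_right,
        real_inner_self_eq_norm_sq] at h
      linarith
    obtain rfl : t = 0 := (mul_eq_zero.mp ht).resolve_right (norm_p_sq_ne_zero hP hpmonic n)
    rw [zero_smul, zero_add] at horth ⊢
    exact ih hw fun j hj => horth j (Nat.lt_succ_of_lt hj)

theorem eq_sum_inner_p_smul (hP : LinearIndependent ℝ P)
    (hpmonic : ∀ n, IsMonicOfDegree P n (p n)) (hportho : ∀ n, ∀ w ∈ Wlt P n, ⟪p n, w⟫ = 0)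
    {n : ℕ} {v : H} (hv : v ∈ Wlt P n) :
    v = ∑ j ∈ Finset.range n, (⟪p j, v⟫ / ‖p j‖ ^ 2) • p j := by
  rw [← sub_eq_zero]
  refine eq_zero_of_forall_inner_p_eq_zero hP hpmonic hportho (sub_mem hv ?_) fun i hi => ?_
  · exact Submodule.sum_mem _ fun j hj =>
      Submodule.smul_mem _ _ (Wlt_mono (Finset.mem_range.mp hj) (hpmonic j).mem_Wlt_succ)
  · rw [inner_sub_right, inner_sum, Finset.sum_eq_single i, real_inner_smul_right,
      real_inner_self_eq_norm_sq, div_mul_cancel₀ _ (norm_p_sq_ne_zero hP hpmonic i), sub_self]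
    · intro j _ hji
      rw [real_inner_smul_right, inner_p_p_of_ne hpmonic hportho hji.symm, mul_zero]
    · exact fun hi' => absurd (Finset.mem_range.mpr hi) hi'

theorem eq_p_add_smul_p_add_smul_p (hP : LinearIndependent ℝ P)
    (hpmonic : ∀ n, IsMonicOfDegree P n (p n)) (hportho : ∀ n, ∀ w ∈ Wlt P n, ⟪p n, w⟫ = 0)
    {n : ℕ} {u : H} (hu : IsMonicOfDegree P (n + 2) u)
    (horth : ∀ j < n, ⟪p j, u⟫ = 0) :
    u = p (n + 2) + (⟪p (n + 1), u⟫ / ‖p (n + 1)‖ ^ 2) • p (n + 1)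
      + (⟪p n, u⟫ / ‖p n‖ ^ 2) • p n := by
  have hsum := eq_sum_inner_p_smul hP hpmonic hportho hu.mem_Wlt_succ
  rw [Finset.sum_range_succ, Finset.sum_range_succ, Finset.sum_range_succ,
    Finset.sum_eq_zero fun j hj => by rw [horth j (Finset.mem_range.mp hj), zero_div, zero_smul],
    inner_p_eq_norm_sq_of_isMonicOfDegree hpmonic hportho hu,
    div_self (norm_p_sq_ne_zero hP hpmonic _), one_smul] at hsum
  exact hsum.trans (by abel)

end Legendre

section Sobolev

variable {Δ : H →ₗ[ℝ] H} {χ : ℝ}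

theorem innerS_comm (x y : H) : innerS Δ χ x y = innerS Δ χ y x := by
  simp only [innerS, real_inner_comm]

theorem innerS_sub_right (x y z : H) :
    innerS Δ χ x (y - z) = innerS Δ χ x y - innerS Δ χ x z := by
  simp only [innerS, map_sub, inner_sub_right]
  ring

theorem innerS_self (x : H) : innerS Δ χ x x = ‖x‖ ^ 2 + χ * ‖Δ x‖ ^ 2 := by
  simp only [innerS, real_inner_self_eq_norm_sq]

theorem inner_add_smul_map_eq_innerS {P : ℕ → H} {G : H →ₗ[ℝ] H}
    (hGsym : ∀ u ∈ Wtot P, ∀ v ∈ Wtot P, ⟪G u, v⟫ = ⟪u, G v⟫)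
    (hGinv : ∀ u ∈ Wtot P, Δ (G u) = u) {q x : H} (hq : q ∈ Wtot P) (hx : x ∈ Wtot P) :
    ⟪q, G x + χ • Δ x⟫ = innerS Δ χ (G q) x := by
  rw [inner_add_right, real_inner_smul_right, innerS, hGsym q hq x hx, hGinv q hq]

end Sobolev

theorem statement6_general
    (P : ℕ → H) (hP : LinearIndependent ℝ P)
    (Δ G : H →ₗ[ℝ] H)
    (hΔ0 : Δ (P 0) = 0) (hΔsucc : ∀ n, Δ (P (n + 1)) = P n)
    (hGsym : ∀ u ∈ Wtot P, ∀ v ∈ Wtot P, ⟪ G u, v ⟫ = ⟪ u, G v ⟫)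
    (hGinv : ∀ u ∈ Wtot P, Δ (G u) = u)
    (hGmap : ∀ n, ∀ u ∈ Wlt P (n + 1), G u ∈ Wlt P (n + 2))
    (χ : ℝ)
    (p : ℕ → H)
    (hpmonic : ∀ n, p n - P n ∈ Wlt P n)
    (hportho : ∀ n, ∀ w ∈ Wlt P n, ⟪ p n, w ⟫ = 0)
    (s : ℕ → H)
    (hsmonic : ∀ n, s n - P n ∈ Wlt P n)
    (hsortho : ∀ n, ∀ w ∈ Wlt P n, innerS Δ χ (s n) w = 0)
    : ∀ n, 1 ≤ n →
      s n + χ • Δ (Δ (s n)) = Δ (p (n + 1))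
        + (innerS Δ χ (G (p n)) (s n) / ‖p n‖ ^ 2) • Δ (p n)
        + ((‖s n‖ ^ 2 + χ * ‖Δ (s n)‖ ^ 2) / ‖p (n - 1)‖ ^ 2) • Δ (p (n - 1)) := by
  intro n hn
  obtain ⟨m, rfl⟩ := Nat.exists_eq_add_of_le' hn
  rw [Nat.add_sub_cancel]
  have hp : ∀ j, IsMonicOfDegree P j (p j) := hpmonic
  have hGmonic {k : ℕ} {x : H} (hx : IsMonicOfDegree P k x) : IsMonicOfDegree P (k + 1) (G x) :=
    hx.map_of_rightInverse hP hΔ0 hΔsucc hGinv hGmap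
  have hs : IsMonicOfDegree P (m + 1) (s (m + 1)) := hsmonic (m + 1)
  have hsW : s (m + 1) ∈ Wtot P := Wlt_le_Wtot _ hs.mem_Wlt_succ
  set u : H := G (s (m + 1)) + χ • Δ (s (m + 1)) with hu_def
  have hcoeff (j : ℕ) : ⟪p j, u⟫ = innerS Δ χ (G (p j)) (s (m + 1)) :=
    inner_add_smul_map_eq_innerS hGsym hGinv (Wlt_le_Wtot _ (hp j).mem_Wlt_succ) hsW
  have hu : IsMonicOfDegree P (m + 2) u :=
    (hGmonic hs).add_of_mem_Wlt <| Submodule.smul_mem _ _ <|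
      Wlt_mono (m + 1).le_succ (map_mem_Wlt_of_mem_Wlt_succ hΔ0 hΔsucc hs.mem_Wlt_succ)
  have hlow (j : ℕ) (hj : j < m) : ⟪p j, u⟫ = 0 := by
    rw [hcoeff, innerS_comm]
    exact hsortho _ _ (Wlt_mono (by omega) (hGmonic (hp j)).mem_Wlt_succ)
  have hnorm : ⟪p m, u⟫ = ‖s (m + 1)‖ ^ 2 + χ * ‖Δ (s (m + 1))‖ ^ 2 := by
    rw [hcoeff, innerS_comm, ← innerS_self, ← sub_eq_zero, ← innerS_sub_right]
    exact hsortho _ _ ((hGmonic (hp m)).sub_mem_Wlt hs)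
  have hexp := congrArg Δ (eq_p_add_smul_p_add_smul_p hP hp hportho hu hlow)
  rw [hnorm, hcoeff, hu_def, map_add, map_add, map_add, map_smul, map_smul, map_smul,
    hGinv _ hsW] at hexp
  exact hexp

/-- Second-order differential equation: for `n ≥ 1`, `s_n + χΔ²s_n = Δp_{n+1} + (⟨f_{n+1}, s_n⟩_S/‖p_n‖₂²)Δp_n + (‖s_n‖_S²/‖p_{n−1}‖₂²)Δp_{n−1}`. -/
theorem statement6
    (P : ℕ → H) (hP : LinearIndependent ℝ P)
    (Δ G : H →ₗ[ℝ] H)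
    (hΔ0 : Δ (P 0) = 0) (hΔsucc : ∀ n, Δ (P (n + 1)) = P n)
    (hGsym : ∀ u ∈ Wtot P, ∀ v ∈ Wtot P, ⟪ G u, v ⟫ = ⟪ u, G v ⟫)
    (hGinv : ∀ u ∈ Wtot P, Δ (G u) = u)
    (hGmap : ∀ n, ∀ u ∈ Wlt P (n + 1), G u ∈ Wlt P (n + 2))
    (χ : ℝ) (hχ : 0 < χ)
    (p : ℕ → H)
    (hpmonic : ∀ n, p n - P n ∈ Wlt P n)
    (hportho : ∀ n, ∀ w ∈ Wlt P n, ⟪ p n, w ⟫ = 0)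
    (s : ℕ → H)
    (hsmonic : ∀ n, s n - P n ∈ Wlt P n)
    (hsortho : ∀ n, ∀ w ∈ Wlt P n, innerS Δ χ (s n) w = 0)
    : ∀ n, 1 ≤ n →
      s n + χ • Δ (Δ (s n)) = Δ (p (n + 1))
        + (innerS Δ χ (G (p n)) (s n) / ‖p n‖ ^ 2) • Δ (p n)
        + ((‖s n‖ ^ 2 + χ * ‖Δ (s n)‖ ^ 2) / ‖p (n - 1)‖ ^ 2) • Δ (p (n - 1)) :=
  statement6_general P hP Δ G hΔ0 hΔsucc hGsym hGinv hGmap χ p hpmonic hportho s hsmonic hsortho
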